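/- For θ ≠ 0 and σ > 0, the function R₂(v) = −v²/(2θ) + (v²/(2θ))·₂F₂(1,1;3/2,2;(θ/σ²)v²) satisfies the ODE (σ²/2)R₂''(v) − θ v R₂'(v) = v² on ℝ, with R₂(0) = 0. -/

import Mathlib

/-- Pochhammer symbol (a)ₙ = a(a+1)⋯(a+n-1). -/
noncomputable def poch (a : ℝ) (n : ℕ) : ℝ := ∏ i ∈ Finset.range n, (a + (i:ℝ))

/-- The generalized hypergeometric function ₂F₂(1,1;3/2,2;z). -/
noncomputable def F22 (z : ℝ) : ℝ :=
  ∑' n : ℕ, (poch 1 n * poch 1 n) / (poch (3/2) n * poch 2 n) * z^n / (n.factorial : ℝ)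

/-- R₂(v) = −v²/(2θ) + (v²/(2θ))·₂F₂(1,1;3/2,2;(θ/σ²)v²). -/
noncomputable def R2 (θ σ : ℝ) (v : ℝ) : ℝ :=
  -v^2 / (2*θ) + v^2 / (2*θ) * F22 (θ / σ^2 * v^2)

lemma poch_succ (a : ℝ) (n : ℕ) : poch a (n+1) = poch a n * (a + n) :=
  Finset.prod_range_succ _ _

lemma poch_one_eq (n : ℕ) : poch 1 n = n.factorial := by
  induction n with
  | zero => simp [poch]
  | succ k ih => rw [poch_succ, ih, Nat.factorial_succ]; push_cast; ring

lemma poch_two_eq (n : ℕ) : poch 2 n = (n+1).factorial := by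
  induction n with
  | zero => simp [poch]
  | succ k ih => rw [poch_succ, ih, Nat.factorial_succ (k+1)]; push_cast; ring

lemma poch_pos {a : ℝ} (ha : 0 < a) (n : ℕ) : 0 < poch a n := by
  apply Finset.prod_pos
  intro i _
  positivity

lemma factorial_le_poch (n : ℕ) : (n.factorial : ℝ) ≤ poch (3/2) n := by
  induction n with
  | zero => simp [poch]
  | succ k ih =>
      rw [poch_succ, Nat.factorial_succ]
      push_cast
      have h2 : ((k:ℝ)+1) ≤ 3/2 + k := by linarith
      calc ((k:ℝ)+1) * k.factorial = (k.factorial : ℝ) * ((k:ℝ)+1) := by ring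
        _ ≤ poch (3/2) k * (3/2 + k) := by
            apply mul_le_mul ih h2 (by positivity)
            exact le_of_lt (poch_pos (by norm_num) k)

noncomputable def Acoef (n : ℕ) : ℝ :=
  (poch 1 n * poch 1 n) / (poch (3/2) n * poch 2 n) / (n.factorial : ℝ)

lemma Acoef_eq (n : ℕ) : Acoef n = 1 / (poch (3/2) n * ((n:ℝ)+1)) := by
  have hP := (poch_pos (show (0:ℝ) < 3/2 by norm_num) n).ne'
  have hf : ((n.factorial : ℕ) : ℝ) ≠ 0 := by positivity
  rw [Acoef, poch_one_eq, poch_two_eq, Nat.factorial_succ]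
  push_cast
  field_simp

lemma Acoef_pos (n : ℕ) : 0 < Acoef n := by
  rw [Acoef_eq]
  have := poch_pos (show (0:ℝ) < 3/2 by norm_num) n
  positivity

lemma Acoef_le (n : ℕ) : Acoef n ≤ 1 / (n.factorial : ℝ) := by
  rw [Acoef_eq]
  have hP := poch_pos (show (0:ℝ) < 3/2 by norm_num) n
  have hf : (0:ℝ) < (n.factorial : ℝ) := by positivity
  apply one_div_le_one_div_of_le hf
  calc (n.factorial : ℝ) = (n.factorial : ℝ) * 1 := by ring
    _ ≤ poch (3/2) n * ((n:ℝ)+1) := by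
        apply mul_le_mul (factorial_le_poch n)
          (by linarith [Nat.cast_nonneg (α := ℝ) n]) (by norm_num) (le_of_lt hP)

lemma Acoef_rec (n : ℕ) :
    Acoef (n+1) * ((3/2 + (n:ℝ)) * ((n:ℝ)+2)) = Acoef n * ((n:ℝ)+1) := by
  have hP := poch_pos (show (0:ℝ) < 3/2 by norm_num) n
  rw [Acoef_eq, Acoef_eq, poch_succ]
  have h1 : (3/2 + (n:ℝ)) ≠ 0 := by positivity
  have h2 : ((n:ℝ)+2) ≠ 0 := by positivity
  have h3 : ((n:ℝ)+1) ≠ 0 := by positivity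
  push_cast
  field_simp
  ring

noncomputable def bb (θ σ : ℝ) (n : ℕ) : ℝ := Acoef n * (θ / σ^2)^n / (2*θ)

lemma bb_zero (θ σ : ℝ) : bb θ σ 0 = 1 / (2*θ) := by
  simp [bb, Acoef, poch]

/-- The key recurrence driving the telescoping sum. -/
lemma key_rec (θ σ : ℝ) (hθ : θ ≠ 0) (hσ : 0 < σ) (n : ℕ) :
    θ * (2*(n:ℝ)+2) * bb θ σ n
      = σ^2/2 * (2*((n:ℝ)+1)+2) * (2*((n:ℝ)+1)+1) * bb θ σ (n+1) := by
  have hσ2 : σ^2 ≠ 0 := by positivity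
  have h1 : (3/2 + (n:ℝ)) ≠ 0 := by positivity
  have h2 : ((n:ℝ)+2) ≠ 0 := by positivity
  have hrec := Acoef_rec n
  rw [bb, bb, pow_succ]
  have expand : Acoef (n+1) = Acoef n * ((n:ℝ)+1) / ((3/2 + (n:ℝ)) * ((n:ℝ)+2)) := by
    field_simp at hrec ⊢
    linarith [hrec]
  rw [expand]
  have hσ0 : σ ≠ 0 := hσ.ne'
  field_simp
  ring_nf
  field_simp

lemma bb_abs_le (θ σ : ℝ) (hθ : θ ≠ 0) (hσ : 0 < σ) (n : ℕ) :
    |bb θ σ n| ≤ (|θ|/σ^2)^n / ((n.factorial : ℝ) * (2*|θ|)) := by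
  have hσ2 : (0:ℝ) < σ^2 := by positivity
  have habs : |θ / σ^2| = |θ| / σ^2 := by rw [abs_div, abs_of_pos hσ2]
  have hf : (0:ℝ) < (n.factorial : ℝ) := by positivity
  rw [bb, abs_div, abs_mul, abs_pow, habs, abs_of_pos (Acoef_pos n), abs_mul]
  have h2 : |(2:ℝ)| = 2 := by norm_num
  rw [h2]
  rw [div_le_div_iff₀ (by positivity) (by positivity)]
  have := Acoef_le n
  calc Acoef n * (|θ|/σ^2)^n * ((n.factorial:ℝ) * (2*|θ|))
      ≤ (1/(n.factorial:ℝ)) * (|θ|/σ^2)^n * ((n.factorial:ℝ) * (2*|θ|)) := by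
        apply mul_le_mul_of_nonneg_right
          (mul_le_mul_of_nonneg_right this (by positivity)) (by positivity)
    _ = (|θ|/σ^2)^n * (2*|θ|) := by field_simp

lemma sq_le_four_pow (n : ℕ) : ((n:ℝ)+1)^2 ≤ 4^n := by
  induction n with
  | zero => norm_num
  | succ k ih =>
      push_cast
      have h4 : (0:ℝ) < 4^k := by positivity
      have hk : (0:ℝ) ≤ k := Nat.cast_nonneg k
      calc ((k:ℝ)+1+1)^2 ≤ 4 * ((k:ℝ)+1)^2 := by nlinarith
        _ ≤ 4 * 4^k := by nlinarith
        _ = 4^(k+1) := by rw [pow_succ]; ring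

lemma summable_master (K q : ℝ) (hq : 0 ≤ q) :
    Summable (fun n : ℕ => K * ((n:ℝ)+1)^2 * q^n / (n.factorial : ℝ)) := by
  have h4 : Summable (fun n : ℕ => |K| * ((4*q)^n / (n.factorial : ℝ))) :=
    (Real.summable_pow_div_factorial (4*q)).mul_left _
  apply Summable.of_norm
  apply h4.of_nonneg_of_le (fun n => norm_nonneg _)
  intro n
  have hf : (0:ℝ) < (n.factorial : ℝ) := by positivity
  rw [Real.norm_eq_abs, abs_div, abs_mul, abs_mul, abs_pow, abs_pow, abs_of_nonneg hq,
    abs_of_nonneg (show (0:ℝ) ≤ (n:ℝ)+1 by positivity), abs_of_pos hf]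
  rw [div_le_iff₀ hf]
  have : ((n:ℝ)+1)^2 * q^n ≤ (4*q)^n := by
    rw [mul_pow]
    exact mul_le_mul_of_nonneg_right (sq_le_four_pow n) (by positivity)
  have hK : 0 ≤ |K| := abs_nonneg K
  calc |K| * ((n:ℝ)+1)^2 * q^n = |K| * (((n:ℝ)+1)^2 * q^n) := by ring
    _ ≤ |K| * (4*q)^n := mul_le_mul_of_nonneg_left this hK
    _ = |K| * ((4*q)^n / (n.factorial:ℝ)) * (n.factorial:ℝ) := by field_simp

lemma bound1 (a p R : ℝ) (ha : 0 < a) (hp : 0 ≤ p) (hR : 1 ≤ R) (b : ℝ) (n : ℕ) (x : ℝ)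
    (hx : |x| ≤ R) (hb : |b| ≤ p^n / ((n.factorial:ℝ) * (2*a))) :
    |b * (2*(n:ℝ)+2) * x^(2*n+1)| ≤ (R/a) * ((n:ℝ)+1)^2 * (p*R^2)^n / (n.factorial:ℝ) := by
  have hf : (0:ℝ) < (n.factorial:ℝ) := by positivity
  have hR0 : (0:ℝ) < R := by linarith
  have hxp : |x^(2*n+1)| ≤ R^(2*n+1) := by
    rw [abs_pow]; exact pow_le_pow_left₀ (abs_nonneg x) hx _
  have hRsplit : R^(2*n+1) = R * (R^2)^n := by
    rw [← pow_mul, ← pow_succ']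
  rw [abs_mul, abs_mul]
  have h2n : |2*(n:ℝ)+2| = 2*(n:ℝ)+2 := abs_of_nonneg (by positivity)
  rw [h2n]
  calc |b| * (2*(n:ℝ)+2) * |x^(2*n+1)|
      ≤ (p^n / ((n.factorial:ℝ) * (2*a))) * (2*(n:ℝ)+2) * (R * (R^2)^n) := by
        rw [← hRsplit]
        apply mul_le_mul (mul_le_mul hb (le_refl _) (by positivity) (by positivity)) hxp
          (abs_nonneg _) (by positivity)
    _ ≤ (R/a) * ((n:ℝ)+1)^2 * (p*R^2)^n / (n.factorial:ℝ) := by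
        rw [mul_pow]
        rw [le_div_iff₀ hf]
        have key : (2*(n:ℝ)+2) ≤ 2 * ((n:ℝ)+1)^2 := by
          nlinarith [Nat.cast_nonneg (α := ℝ) n]
        have e1 : p ^ n / (↑n.factorial * (2 * a)) * (2 * ↑n + 2) * (R * (R ^ 2) ^ n)
              * ↑n.factorial
            = (p^n * (R^2)^n * R / a) * ((2*(n:ℝ)+2)/2) := by field_simp
        rw [e1]
        have e2 : R / a * (↑n + 1) ^ 2 * (p ^ n * (R ^ 2) ^ n)
            = (p^n * (R^2)^n * R / a) * ((n:ℝ)+1)^2 := by ring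
        rw [e2]
        apply mul_le_mul_of_nonneg_left _ (by positivity)
        linarith

lemma bound2 (a p R : ℝ) (ha : 0 < a) (hp : 0 ≤ p) (hR : 1 ≤ R) (b : ℝ) (n : ℕ) (x : ℝ)
    (hx : |x| ≤ R) (hb : |b| ≤ p^n / ((n.factorial:ℝ) * (2*a))) :
    |b * (2*(n:ℝ)+2) * (2*(n:ℝ)+1) * x^(2*n)|
      ≤ (2/a) * ((n:ℝ)+1)^2 * (p*R^2)^n / (n.factorial:ℝ) := by
  have hf : (0:ℝ) < (n.factorial:ℝ) := by positivity
  have hR0 : (0:ℝ) < R := by linarith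
  have hxp : |x^(2*n)| ≤ (R^2)^n := by
    rw [abs_pow, pow_mul]
    exact pow_le_pow_left₀ (by positivity) (by nlinarith [abs_nonneg x, sq_abs x]) _
  rw [abs_mul, abs_mul, abs_mul]
  have h2n : |2*(n:ℝ)+2| = 2*(n:ℝ)+2 := abs_of_nonneg (by positivity)
  have h2n' : |2*(n:ℝ)+1| = 2*(n:ℝ)+1 := abs_of_nonneg (by positivity)
  rw [h2n, h2n']
  calc |b| * (2*(n:ℝ)+2) * (2*(n:ℝ)+1) * |x^(2*n)|
      ≤ (p^n / ((n.factorial:ℝ) * (2*a))) * (2*(n:ℝ)+2) * (2*(n:ℝ)+1) * (R^2)^n := by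
        apply mul_le_mul _ hxp (abs_nonneg _) (by positivity)
        apply mul_le_mul _ (le_refl _) (by positivity) (by positivity)
        apply mul_le_mul hb (le_refl _) (by positivity) (by positivity)
    _ ≤ (2/a) * ((n:ℝ)+1)^2 * (p*R^2)^n / (n.factorial:ℝ) := by
        rw [mul_pow]
        rw [le_div_iff₀ hf]
        have key : (2*(n:ℝ)+2) * (2*(n:ℝ)+1) ≤ 4 * ((n:ℝ)+1)^2 := by
          nlinarith [Nat.cast_nonneg (α := ℝ) n]
        have e1 : p ^ n / (↑n.factorial * (2 * a)) * (2 * ↑n + 2) * (2 * ↑n + 1)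
              * (R ^ 2) ^ n * ↑n.factorial
            = (p^n * (R^2)^n / (2*a)) * ((2*(n:ℝ)+2) * (2*(n:ℝ)+1)) := by field_simp
        rw [e1]
        have e2 : 2 / a * (↑n + 1) ^ 2 * (p ^ n * (R ^ 2) ^ n)
            = (p^n * (R^2)^n / (2*a)) * (4 * ((n:ℝ)+1)^2) := by field_simp; ring
        rw [e2]
        exact mul_le_mul_of_nonneg_left key (by positivity)

lemma hd0 (b : ℝ) (n : ℕ) (x : ℝ) :
    HasDerivAt (fun y : ℝ => b * y^(2*n+2)) (b * (2*(n:ℝ)+2) * x^(2*n+1)) x := by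
  have h := (hasDerivAt_pow (2*n+2) x).const_mul b
  refine h.congr_deriv (Eq.symm ?_)
  rw [show 2*n+2-1 = 2*n+1 from by omega]
  push_cast
  ring

lemma hd1 (b : ℝ) (n : ℕ) (x : ℝ) :
    HasDerivAt (fun y : ℝ => b * (2*(n:ℝ)+2) * y^(2*n+1))
      (b * (2*(n:ℝ)+2) * (2*(n:ℝ)+1) * x^(2*n)) x := by
  have h := (hasDerivAt_pow (2*n+1) x).const_mul (b * (2*(n:ℝ)+2))
  refine h.congr_deriv (Eq.symm ?_)
  rw [show 2*n+1-1 = 2*n from by omega]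
  push_cast
  ring

/-- For θ ≠ 0 and σ > 0, R₂ solves (σ²/2)R₂''(v) − θvR₂'(v) = v² on ℝ with R₂(0) = 0. -/
theorem R2_solves_ODE (θ σ : ℝ) (hθ : θ ≠ 0) (hσ : 0 < σ) :
    (∀ v : ℝ, σ^2 / 2 * deriv (deriv (R2 θ σ)) v - θ * v * deriv (R2 θ σ) v = v^2) ∧
    R2 θ σ 0 = 0 := by
  have hθa : (0:ℝ) < |θ| := abs_pos.mpr hθ
  have hp : (0:ℝ) ≤ |θ|/σ^2 := by positivity
  -- term-by-term derivative of the main series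
  have hdg : ∀ v : ℝ, HasDerivAt (fun x : ℝ => ∑' n : ℕ, bb θ σ n * x^(2*n+2))
      (∑' n : ℕ, bb θ σ n * (2*(n:ℝ)+2) * v^(2*n+1)) v := by
    intro v
    have hR : (1:ℝ) ≤ |v| + 1 := by linarith [abs_nonneg v]
    have hR0 : (0:ℝ) < |v| + 1 := by positivity
    apply hasDerivAt_tsum_of_isPreconnected
      (u := fun n : ℕ => ((|v|+1)/|θ|) * ((n:ℝ)+1)^2 * ((|θ|/σ^2)*(|v|+1)^2)^n / (n.factorial:ℝ))
      (t := Metric.ball (0:ℝ) (|v|+1)) (y₀ := (0:ℝ))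
      (g := fun (n : ℕ) (x : ℝ) => bb θ σ n * x^(2*n+2))
      (g' := fun (n : ℕ) (x : ℝ) => bb θ σ n * (2*(n:ℝ)+2) * x^(2*n+1))
    · exact summable_master _ _ (by positivity)
    · exact Metric.isOpen_ball
    · exact (convex_ball (0:ℝ) _).isPreconnected
    · exact fun n y _ => hd0 (bb θ σ n) n y
    · intro n y hy
      rw [Real.norm_eq_abs]
      exact bound1 |θ| (|θ|/σ^2) (|v|+1) hθa hp hR (bb θ σ n) n y
        (le_of_lt (by simpa [abs_of_nonneg] using mem_ball_zero_iff.mp hy))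
        (bb_abs_le θ σ hθ hσ n)
    · exact Metric.mem_ball_self hR0
    · have : (fun n : ℕ => bb θ σ n * (0:ℝ)^(2*n+2)) = fun _ => 0 := by
        funext n; simp
      rw [this]; exact summable_zero
    · exact mem_ball_zero_iff.mpr (by simp [Real.norm_eq_abs])
  -- term-by-term derivative of the derivative series
  have hdg1 : ∀ v : ℝ, HasDerivAt (fun x : ℝ => ∑' n : ℕ, bb θ σ n * (2*(n:ℝ)+2) * x^(2*n+1))
      (∑' n : ℕ, bb θ σ n * (2*(n:ℝ)+2) * (2*(n:ℝ)+1) * v^(2*n)) v := by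
    intro v
    have hR : (1:ℝ) ≤ |v| + 1 := by linarith [abs_nonneg v]
    have hR0 : (0:ℝ) < |v| + 1 := by positivity
    apply hasDerivAt_tsum_of_isPreconnected
      (u := fun n : ℕ => (2/|θ|) * ((n:ℝ)+1)^2 * ((|θ|/σ^2)*(|v|+1)^2)^n / (n.factorial:ℝ))
      (t := Metric.ball (0:ℝ) (|v|+1)) (y₀ := (0:ℝ))
      (g := fun (n : ℕ) (x : ℝ) => bb θ σ n * (2*(n:ℝ)+2) * x^(2*n+1))
      (g' := fun (n : ℕ) (x : ℝ) => bb θ σ n * (2*(n:ℝ)+2) * (2*(n:ℝ)+1) * x^(2*n))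
    · exact summable_master _ _ (by positivity)
    · exact Metric.isOpen_ball
    · exact (convex_ball (0:ℝ) _).isPreconnected
    · exact fun n y _ => hd1 (bb θ σ n) n y
    · intro n y hy
      rw [Real.norm_eq_abs]
      exact bound2 |θ| (|θ|/σ^2) (|v|+1) hθa hp hR (bb θ σ n) n y
        (le_of_lt (by simpa [abs_of_nonneg] using mem_ball_zero_iff.mp hy))
        (bb_abs_le θ σ hθ hσ n)
    · exact Metric.mem_ball_self hR0
    · have : (fun n : ℕ => bb θ σ n * (2*(n:ℝ)+2) * (0:ℝ)^(2*n+1)) = fun _ => 0 := by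
        funext n; simp
      rw [this]; exact summable_zero
    · exact mem_ball_zero_iff.mpr (by simp [Real.norm_eq_abs])
  -- summability of the second-derivative series
  have hsum2 : ∀ v : ℝ, Summable (fun n : ℕ =>
      bb θ σ n * (2*(n:ℝ)+2) * (2*(n:ℝ)+1) * v^(2*n)) := by
    intro v
    have hR : (1:ℝ) ≤ |v| + 1 := by linarith [abs_nonneg v]
    apply Summable.of_norm
    apply (summable_master (2/|θ|) ((|θ|/σ^2)*(|v|+1)^2) (by positivity)).of_nonneg_of_le
      (fun n => norm_nonneg _)
    intro n
    rw [Real.norm_eq_abs]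
    exact bound2 |θ| (|θ|/σ^2) (|v|+1) hθa hp hR (bb θ σ n) n v (by linarith [abs_nonneg v])
      (bb_abs_le θ σ hθ hσ n)
  -- rewrite R2 as the series minus the quadratic
  have hR2eq : R2 θ σ = fun v : ℝ => (∑' n : ℕ, bb θ σ n * v^(2*n+2)) - v^2/(2*θ) := by
    funext v
    rw [R2, F22, ← tsum_mul_left]
    have hterm : ∀ n : ℕ, v^2/(2*θ) *
        ((poch 1 n * poch 1 n) / (poch (3/2) n * poch 2 n) * (θ/σ^2*v^2)^n / (n.factorial:ℝ))
        = bb θ σ n * v^(2*n+2) := by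
      intro n
      rw [bb, Acoef, mul_pow, pow_add, pow_mul]
      ring
    rw [tsum_congr hterm]
    ring
  -- first derivative
  have hder1 : deriv (R2 θ σ)
      = fun v : ℝ => (∑' n : ℕ, bb θ σ n * (2*(n:ℝ)+2) * v^(2*n+1)) - v/θ := by
    funext v
    rw [hR2eq]
    have h2 : HasDerivAt (fun x : ℝ => x^2/(2*θ)) (v/θ) v := by
      have h := (hasDerivAt_pow 2 v).div_const (2*θ)
      refine h.congr_deriv (Eq.symm ?_)
      push_cast
      rw [pow_one]
      exact (mul_div_mul_left v θ two_ne_zero).symm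
    exact ((hdg v).sub h2).deriv
  -- second derivative
  have hder2 : ∀ v : ℝ, deriv (deriv (R2 θ σ)) v
      = (∑' n : ℕ, bb θ σ n * (2*(n:ℝ)+2) * (2*(n:ℝ)+1) * v^(2*n)) - 1/θ := by
    intro v
    rw [hder1]
    have h1 : HasDerivAt (fun x : ℝ => x/θ) (1/θ) v := by
      simpa using (hasDerivAt_id v).div_const θ
    exact ((hdg1 v).sub h1).deriv
  -- telescoping identity
  have key : ∀ v : ℝ,
      σ^2/2 * (∑' n : ℕ, bb θ σ n * (2*(n:ℝ)+2) * (2*(n:ℝ)+1) * v^(2*n))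
        - θ*v*(∑' n : ℕ, bb θ σ n * (2*(n:ℝ)+2) * v^(2*n+1)) = σ^2/(2*θ) := by
    intro v
    set T : ℕ → ℝ :=
      fun m => σ^2/2 * (2*(m:ℝ)+2) * (2*(m:ℝ)+1) * bb θ σ m * v^(2*m) with hT
    have e2 : σ^2/2 * (∑' n : ℕ, bb θ σ n * (2*(n:ℝ)+2) * (2*(n:ℝ)+1) * v^(2*n))
        = ∑' n : ℕ, T n := by
      rw [← tsum_mul_left]
      apply tsum_congr
      intro n
      simp only [hT]
      ring
    have e1 : θ*v*(∑' n : ℕ, bb θ σ n * (2*(n:ℝ)+2) * v^(2*n+1)) = ∑' n : ℕ, T (n+1) := by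
      rw [← tsum_mul_left]
      apply tsum_congr
      intro n
      have hrec := key_rec θ σ hθ hσ n
      have hpow : v^(2*(n+1)) = v^(2*n+1) * v := by
        rw [show 2*(n+1) = (2*n+1)+1 from by ring, pow_succ]
      calc θ*v*(bb θ σ n * (2*(n:ℝ)+2) * v^(2*n+1))
          = (θ * (2*(n:ℝ)+2) * bb θ σ n) * (v^(2*n+1) * v) := by ring
        _ = (σ^2/2 * (2*((n:ℝ)+1)+2) * (2*((n:ℝ)+1)+1) * bb θ σ (n+1)) * (v^(2*n+1) * v) := by
            rw [hrec]
        _ = T (n+1) := by simp only [hT]; rw [hpow]; push_cast; ring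
    have hsT : Summable T := by
      apply Summable.congr ((hsum2 v).mul_left (σ^2/2))
      intro n
      simp only [hT]
      ring
    have hshift := Summable.tsum_eq_zero_add hsT
    rw [e2, e1, hshift]
    have hT0 : T 0 = σ^2/(2*θ) := by
      rw [hT]
      simp [bb_zero]
      field_simp
    rw [hT0]
    ring
  constructor
  · intro v
    rw [hder2 v, hder1]
    have h1 : θ*v*(v/θ) = v^2 := by field_simp
    have h2 : σ^2/2*(1/θ) = σ^2/(2*θ) := by ring
    set S1 : ℝ := ∑' n : ℕ, bb θ σ n * (2*(n:ℝ)+2) * v^(2*n+1) with hS1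
    set S2 : ℝ := ∑' n : ℕ, bb θ σ n * (2*(n:ℝ)+2) * (2*(n:ℝ)+1) * v^(2*n) with hS2
    have hk := key v
    rw [← hS1, ← hS2] at hk
    calc σ^2/2 * (S2 - 1/θ) - θ*v*(S1 - v/θ)
        = (σ^2/2*S2 - θ*v*S1) - σ^2/2*(1/θ) + θ*v*(v/θ) := by ring
      _ = σ^2/(2*θ) - σ^2/(2*θ) + v^2 := by rw [hk, h1, h2]
      _ = v^2 := by ring
  · simp [R2]
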